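/- arXiv:math/0509029 — 2 statements merged into one kernel-verified Lean document; each statement's English description precedes it below -/
import Mathlib

section
/- Let T be a nonzero bounded linear operator on a complex Hilbert space, λ ∈ ℂ nonzero, r > 0 with |λ| > r and ‖T − λI‖ ≤ r. Then ‖T‖² − w(T)² ≤ (r²/|λ|²)·‖T‖². -/
/-!
For a unit vector `x`, expanding `‖T x - λ x‖² ≤ r²` gives
`‖T x‖² + (|λ|² - r²) ≤ 2 Re (λ ⟪T x, x⟫) ≤ 2 |λ| w(T)`. Since `|λ| > r`, AM-GM turns this
into `‖T x‖² (|λ|² - r²) ≤ |λ|² w(T)²`; taking the supremum over `x` gives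
`‖T‖² (|λ|² - r²) ≤ |λ|² w(T)²`, which rearranges to the claim.
-/

noncomputable def numRadius {H : Type*} [NormedAddCommGroup H] [InnerProductSpace ℂ H]
    (T : H →L[ℂ] H) : ℝ :=
  sSup {r : ℝ | ∃ x : H, ‖x‖ = 1 ∧ r = ‖(inner ℂ (T x) x : ℂ)‖}

open ContinuousLinearMap

section NumRadius

variable {H : Type*} [NormedAddCommGroup H] [InnerProductSpace ℂ H]

theorem norm_inner_le_numRadius (T : H →L[ℂ] H) {x : H} (hx : ‖x‖ = 1) :
    ‖(inner ℂ (T x) x : ℂ)‖ ≤ numRadius T := by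
  have hbdd : BddAbove {r : ℝ | ∃ x : H, ‖x‖ = 1 ∧ r = ‖(inner ℂ (T x) x : ℂ)‖} := by
    refine ⟨‖T‖, ?_⟩
    rintro _ ⟨y, hy, rfl⟩
    calc ‖(inner ℂ (T y) y : ℂ)‖ ≤ ‖T y‖ * ‖y‖ := norm_inner_le_norm _ _
      _ ≤ ‖T‖ * ‖y‖ * ‖y‖ := by gcongr; exact T.le_opNorm y
      _ = ‖T‖ := by rw [hy, mul_one, mul_one]
  exact le_csSup hbdd ⟨x, hx, rfl⟩

theorem norm_apply_sq_add_norm_sq_le (T : H →L[ℂ] H) (lam : ℂ) {x : H} (hx : ‖x‖ = 1) :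
    ‖T x‖ ^ 2 + ‖lam‖ ^ 2 ≤ 2 * ‖lam‖ * numRadius T + ‖T - lam • (1 : H →L[ℂ] H)‖ ^ 2 := by
  have hexpand : ‖T x - lam • x‖ ^ 2 =
      ‖T x‖ ^ 2 - 2 * (lam * inner ℂ (T x) x).re + ‖lam‖ ^ 2 := by
    rw [norm_sub_sq (𝕜 := ℂ), inner_smul_right, norm_smul, hx, mul_one]
    rfl
  have hre : (lam * inner ℂ (T x) x).re ≤ ‖lam‖ * numRadius T :=
    calc (lam * inner ℂ (T x) x).re ≤ ‖lam * inner ℂ (T x) x‖ := Complex.re_le_norm _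
      _ ≤ ‖lam‖ * numRadius T := by rw [norm_mul]; gcongr; exact norm_inner_le_numRadius T hx
  have hdist : ‖T x - lam • x‖ ≤ ‖T - lam • (1 : H →L[ℂ] H)‖ := by
    simpa [hx] using (T - lam • (1 : H →L[ℂ] H)).le_opNorm x
  nlinarith [pow_le_pow_left₀ (norm_nonneg _) hdist 2]

end NumRadius

theorem mul_le_sq_of_add_le_two_mul {a b m : ℝ} (hab : a + b ≤ 2 * m) (ha : 0 ≤ a) (hb : 0 ≤ b) :
    a * b ≤ m ^ 2 := by
  nlinarith [sq_nonneg (a - b)]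

theorem ContinuousLinearMap.norm_sq_le_of_unit_norm {E F : Type*} [NormedAddCommGroup E]
    [NormedSpace ℝ E] [NormedAddCommGroup F] [NormedSpace ℝ F] {f : E →L[ℝ] F} {C : ℝ}
    (hC : 0 ≤ C) (hf : ∀ x, ‖x‖ = 1 → ‖f x‖ ^ 2 ≤ C) : ‖f‖ ^ 2 ≤ C := by
  have hle : ‖f‖ ≤ √C :=
    opNorm_le_of_unit_norm (Real.sqrt_nonneg C) fun x hx => Real.le_sqrt_of_sq_le (hf x hx)
  simpa [Real.sq_sqrt hC] using pow_le_pow_left₀ (norm_nonneg f) hle 2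

theorem stmt_9_general {H : Type*} [NormedAddCommGroup H] [InnerProductSpace ℂ H]
    (T : H →L[ℂ] H) (lam : ℂ) (r : ℝ)
    (hlr : r < ‖lam‖) (h : ‖T - lam • (1 : H →L[ℂ] H)‖ ≤ r) :
    ‖T‖ ^ 2 - numRadius T ^ 2 ≤ (r ^ 2 / ‖lam‖ ^ 2) * ‖T‖ ^ 2 := by
  have hr0 : 0 ≤ r := (norm_nonneg _).trans h
  have hlam0 : 0 < ‖lam‖ := hr0.trans_lt hlr
  have hgap : 0 < ‖lam‖ ^ 2 - r ^ 2 := by nlinarith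
  have hunit : ∀ x : H, ‖x‖ = 1 →
      ‖T x‖ ^ 2 ≤ (‖lam‖ * numRadius T) ^ 2 / (‖lam‖ ^ 2 - r ^ 2) := fun x hx => by
    rw [le_div_iff₀ hgap]
    refine mul_le_sq_of_add_le_two_mul ?_ (sq_nonneg _) hgap.le
    nlinarith [norm_apply_sq_add_norm_sq_le T lam hx, pow_le_pow_left₀ (norm_nonneg _) h 2]
  have hbound : ‖T‖ ^ 2 * (‖lam‖ ^ 2 - r ^ 2) ≤ ‖lam‖ ^ 2 * numRadius T ^ 2 := by
    rw [← le_div_iff₀ hgap, ← mul_pow]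
    exact norm_sq_le_of_unit_norm (f := T.restrictScalars ℝ)
      (div_nonneg (sq_nonneg _) hgap.le) hunit
  rw [div_mul_eq_mul_div, le_div_iff₀ (pow_pos hlam0 2)]
  linarith

theorem stmt_9 {H : Type*} [NormedAddCommGroup H] [InnerProductSpace ℂ H] [CompleteSpace H]
    (T : H →L[ℂ] H) (hT : T ≠ 0) (lam : ℂ) (hlam : lam ≠ 0) (r : ℝ) (hr : 0 < r)
    (hlr : r < ‖lam‖) (h : ‖T - lam • (1 : H →L[ℂ] H)‖ ≤ r) :
    ‖T‖ ^ 2 - numRadius T ^ 2 ≤ (r ^ 2 / ‖lam‖ ^ 2) * ‖T‖ ^ 2 :=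
  stmt_9_general T lam r hlr h
end

section
/- Let φ, Φ ∈ ℂ with Re(Φ·conj(φ)) > 0 and A a bounded linear operator on a complex Hilbert space such that Re⟨Φx − Ax, Ax − φx⟩ ≥ 0 for all unit vectors x. Then ‖A‖² − w(A)² ≤ (|Φ + φ| − 2·sqrt(Re(Φ·conj(φ))))·w(A). -/
open ComplexConjugate

theorem two_sqrt_re_mul_conj_le_norm_add (z w : ℂ) : 2 * √(z * conj w).re ≤ ‖z + w‖ := by
  have hre : (z * conj w).re ≤ ‖z‖ * ‖w‖ := by
    simpa using Complex.re_le_norm (z * conj w)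
  have hsq : ‖z + w‖ ^ 2 = ‖z‖ ^ 2 + ‖w‖ ^ 2 + 2 * (z * conj w).re := by
    rw [Complex.sq_norm, Complex.normSq_add, Complex.sq_norm, Complex.sq_norm]
  have h4 : 4 * (z * conj w).re ≤ ‖z + w‖ ^ 2 := by nlinarith [sq_nonneg (‖z‖ - ‖w‖)]
  calc 2 * √(z * conj w).re = √(4 * (z * conj w).re) := by
        rw [Real.sqrt_mul (by norm_num), show (4 : ℝ) = 2 ^ 2 by norm_num,
          Real.sqrt_sq (by norm_num)]
    _ ≤ ‖z + w‖ := (Real.sqrt_le_left (norm_nonneg _)).mpr h4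

theorem ContinuousLinearMap.sq_opNorm_le_of_unit_norm {𝕜 E F : Type*} [RCLike 𝕜]
    [SeminormedAddCommGroup E] [NormedSpace 𝕜 E] [SeminormedAddCommGroup F] [NormedSpace 𝕜 F]
    {T : E →L[𝕜] F} {C : ℝ} (hC : 0 ≤ C) (hT : ∀ x, ‖x‖ = 1 → ‖T x‖ ^ 2 ≤ C) :
    ‖T‖ ^ 2 ≤ C := by
  have : ‖T‖ ≤ √C := T.opNorm_le_of_unit_norm (Real.sqrt_nonneg C) fun x hx =>
    (Real.le_sqrt (norm_nonneg _) hC).mpr (hT x hx)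
  exact (Real.le_sqrt (norm_nonneg _) hC).mp this

section InnerProductSpace

variable {H : Type*} [NormedAddCommGroup H] [InnerProductSpace ℂ H]

theorem re_inner_smul_sub_sub_smul (Φ φ : ℂ) (x y : H) :
    (inner ℂ (Φ • x - y) (y - φ • x)).re =
      ((Φ + φ) * inner ℂ y x).re - ‖y‖ ^ 2 - (Φ * conj φ).re * ‖x‖ ^ 2 := by
  rw [inner_sub_left, inner_sub_right, inner_sub_right, inner_smul_left, inner_smul_left,
    inner_smul_right, inner_smul_right, ← inner_conj_symm x y, inner_self_eq_norm_sq_to_K,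
    inner_self_eq_norm_sq_to_K]
  simp only [Complex.coe_algebraMap, ← Complex.ofReal_pow, Complex.sub_re, Complex.add_re,
    Complex.add_im, Complex.mul_re, Complex.mul_im, Complex.conj_re, Complex.conj_im,
    Complex.ofReal_re, Complex.ofReal_im]
  ring

theorem numRadius_nonneg (T : H →L[ℂ] H) : 0 ≤ numRadius T :=
  Real.sSup_nonneg (by rintro r ⟨x, -, rfl⟩; positivity)

theorem norm_inner_apply_le_numRadius (T : H →L[ℂ] H) {x : H} (hx : ‖x‖ = 1) :
    ‖inner ℂ (T x) x‖ ≤ numRadius T := by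
  refine le_csSup ⟨‖T‖, ?_⟩ ⟨x, hx, rfl⟩
  rintro r ⟨y, hy, rfl⟩
  calc ‖inner ℂ (T y) y‖ ≤ ‖T y‖ * ‖y‖ := norm_inner_le_norm _ _
    _ ≤ ‖T‖ := by simpa [hy] using T.le_opNorm y

theorem norm_apply_sq_add_re_mul_conj_le {A : H →L[ℂ] H} {φ Φ : ℂ} {x : H} (hx : ‖x‖ = 1)
    (h : 0 ≤ (inner ℂ (Φ • x - A x) (A x - φ • x)).re) :
    ‖A x‖ ^ 2 + (Φ * conj φ).re ≤ ‖Φ + φ‖ * numRadius A := by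
  rw [re_inner_smul_sub_sub_smul, hx] at h
  calc ‖A x‖ ^ 2 + (Φ * conj φ).re ≤ ((Φ + φ) * inner ℂ (A x) x).re := by linarith
    _ ≤ ‖Φ + φ‖ * ‖inner ℂ (A x) x‖ := (Complex.re_le_norm _).trans_eq (norm_mul _ _)
    _ ≤ ‖Φ + φ‖ * numRadius A := by gcongr; exact norm_inner_apply_le_numRadius A hx

end InnerProductSpace

theorem stmt_14_general {H : Type*} [NormedAddCommGroup H] [InnerProductSpace ℂ H]
    (A : H →L[ℂ] H) (phi Phi : ℂ) (hre : 0 < (Phi * starRingEnd ℂ phi).re)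
    (h : ∀ x : H, ‖x‖ = 1 → 0 ≤ (inner ℂ (Phi • x - A x) (A x - phi • x) : ℂ).re) :
    ‖A‖ ^ 2 - numRadius A ^ 2 ≤
      (‖Phi + phi‖ - 2 * Real.sqrt (Phi * starRingEnd ℂ phi).re) *
        numRadius A := by
  set w := numRadius A
  set r := (Phi * conj phi).re
  have hw : 0 ≤ w := numRadius_nonneg A
  have hgap : 0 ≤ ‖Phi + phi‖ - 2 * √r :=
    sub_nonneg.mpr (two_sqrt_re_mul_conj_le_norm_add Phi phi)
  have hsqrt : √r ^ 2 = r := Real.sq_sqrt hre.le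
  suffices ‖A‖ ^ 2 ≤ w ^ 2 + (‖Phi + phi‖ - 2 * √r) * w by linarith
  refine A.sq_opNorm_le_of_unit_norm (by positivity) fun x hx => ?_
  nlinarith [norm_apply_sq_add_re_mul_conj_le hx (h x hx), sq_nonneg (w - √r)]

theorem stmt_14 {H : Type*} [NormedAddCommGroup H] [InnerProductSpace ℂ H] [CompleteSpace H]
    (A : H →L[ℂ] H) (phi Phi : ℂ) (hre : 0 < (Phi * starRingEnd ℂ phi).re)
    (h : ∀ x : H, ‖x‖ = 1 → 0 ≤ (inner ℂ (Phi • x - A x) (A x - phi • x) : ℂ).re) :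
    ‖A‖ ^ 2 - numRadius A ^ 2 ≤
      (‖Phi + phi‖ - 2 * Real.sqrt (Phi * starRingEnd ℂ phi).re) *
        numRadius A :=
  stmt_14_general A phi Phi hre h
end
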